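/- Let X be a connected multigraph with 2 ≤ deg(x) ≤ M for all x, that is not a cycle and in which small cycles are dense. Then X is roughly isometric to its symmetrized oriented line graph (vertex set = oriented edges E, with e ∼ f iff e → f or f → e), via the map φ(e) = e⁻. -/

import Mathlib

open scoped BigOperators
open Filter

/-- A multigraph given by its set of *oriented* edges. Each oriented edge `e`
has an initial vertex `tail e = e⁻`, a terminal vertex `head e = e⁺`, and a
reversal `bar e = ě` with `ě ≠ e` (loops are counted twice). Local finiteness
is built in. -/
structure Multigraph where
  V : Type
  E : Type
  tail : E → V
  head : E → V
  bar : E → E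
  bar_bar : ∀ e, bar (bar e) = e
  bar_ne : ∀ e, bar e ≠ e
  head_bar : ∀ e, head (bar e) = tail e
  locFin : ∀ x, {e | tail e = x}.Finite

namespace Multigraph
variable (G : Multigraph)

/-- The degree of a vertex: the number of oriented edges emanating from it. -/
noncomputable def deg (x : G.V) : ℕ := (G.locFin x).toFinset.card

/-- `e → f`: `f` may follow `e` in a non-backtracking walk. -/
def Step (e f : G.E) : Prop := G.tail f = G.head e ∧ f ≠ G.bar e

/-- `e ⇒ f`: there is a non-backtracking walk from `e` to `f`. -/
def Reach : G.E → G.E → Prop := Relation.ReflTransGen G.Step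

/-- One-step transition probabilities of the edge non-backtracking random walk. -/
noncomputable def q (e f : G.E) : ℝ :=
  open Classical in
  if G.Step e f then 1 / ((G.deg (G.head e) : ℝ) - 1) else 0

/-- `n`-step transition probabilities `q_E^(n)` of the edge NBRW. -/
noncomputable def qn (G : Multigraph) : ℕ → G.E → G.E → ℝ
  | 0, e, f => open Classical in if e = f then 1 else 0
  | n + 1, e, f => ∑' g : G.E, qn G n e g * G.q g f

/-- Vertex NBRW transition probabilities:
`q^(n)(x,y) = (1/deg x) ∑_{e⁺=x, f⁺=y} q_E^(n)(e,f)`. -/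
noncomputable def qv (n : ℕ) (x y : G.V) : ℝ :=
  (1 / (G.deg x : ℝ)) *
    ∑' (e : {e : G.E // G.head e = x}) (f : {f : G.E // G.head f = y}),
      G.qn n e.1 f.1

def Adj (x y : G.V) : Prop := ∃ e : G.E, G.tail e = x ∧ G.head e = y

def Connected : Prop := ∀ x y : G.V, Relation.ReflTransGen G.Adj x y

/-- There is a walk of length `n` from `x` to `y`. -/
def WalkLen (G : Multigraph) : ℕ → G.V → G.V → Prop
  | 0, x, y => x = y
  | n + 1, x, y => ∃ z, G.Adj x z ∧ WalkLen G n z y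

/-- Graph distance. -/
noncomputable def dist (x y : G.V) : ℕ := sInf {n | G.WalkLen n x y}

/-- A cycle: a nonempty list of distinct oriented edges, with distinct initial
vertices, such that consecutive edges (cyclically) form non-backtracking steps. -/
def IsCycle (l : List G.E) : Prop :=
  l ≠ [] ∧ l.Nodup ∧ (l.map G.tail).Nodup ∧ List.Chain' G.Step (l ++ l.take 1)

/-- Small cycles are dense: some radius `R` works for every ball. -/
def SmallCyclesDense : Prop :=
  ∃ R : ℕ, ∀ x : G.V, ∃ l : List G.E, G.IsCycle l ∧ ∀ e ∈ l, G.dist x (G.tail e) ≤ R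

/-- `X` is a (finite) cycle graph. -/
def IsCycleGraph : Prop := (Set.univ : Set G.V).Finite ∧ ∀ x, G.deg x = 2

def Bipartite : Prop := ∃ c : G.V → Bool, ∀ e : G.E, c (G.tail e) ≠ c (G.head e)

end Multigraph

/-- There is a walk of length `n` between two points for a relation `r`. -/
def relWalkLen {α : Type} (r : α → α → Prop) : ℕ → α → α → Prop
  | 0, a, b => a = b
  | n + 1, a, b => ∃ c, r a c ∧ relWalkLen r n c b

/-- Graph distance of the symmetrized oriented line graph of `G`: vertices are the
oriented edges of `G`, with `e ∼ f` iff `e → f` or `f → e`. -/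
noncomputable def solgDist (G : Multigraph) (e f : G.E) : ℕ :=
  sInf {n | relWalkLen (fun a b => G.Step a b ∨ G.Step b a) n e f}

/-!
Each step of the symmetrized oriented line graph moves the tail of an edge along one edge of
`X`, so `φ(e) = e⁻` is 1-Lipschitz; it is onto because every degree is positive. Conversely, a
geodesic of `X` from `e⁻` to `f⁻` lifts step by step to a line-graph walk of the same length
(degree `≥ 2` lets the lift turn away from backtracking), ending at an edge with tail `f⁻`; from
there one turn reaches `f̄`, and it remains to reverse `f̄`.

Reversing is uniformly cheap. Since `X` is connected and not a cycle, every cycle `c₁ → ⋯ → cₖ`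
has a branch point: an edge `h ≠ cᵢ` with `h⁻ = cᵢ⁻` and `h ≠ c̄ᵢ₋₁`, and then
`cᵢ ∼ cᵢ₋₁ ∼ h ∼ c̄ᵢ` reverses `cᵢ` in three steps. If `f` reverses in `n` steps and
`e⁻ = f⁻`, then `e ∼ f̄ ⋯ f ∼ ē` reverses `e` in `n + 2`. Walking from `e⁻` to a cycle within
distance `R` thus reverses every edge in at most `2R + 5` steps, and `φ` is a
`(1, 2R + 6)` rough isometry.
-/

section relWalkLen

variable {α β : Type} {r : α → α → Prop}

lemma relWalkLen_add : ∀ {m n : ℕ} {a b c : α},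
    relWalkLen r m a b → relWalkLen r n b c → relWalkLen r (m + n) a c
  | 0, _, _, _, _, (hab : _ = _), hbc => by rwa [hab, Nat.zero_add]
  | _ + 1, _, _, _, _, ⟨d, had, hdb⟩, hbc => by
      rw [Nat.succ_add]; exact ⟨d, had, relWalkLen_add hdb hbc⟩

lemma relWalkLen_one {a b : α} (h : r a b) : relWalkLen r 1 a b := ⟨b, h, rfl⟩

lemma relWalkLen_symm (hr : ∀ ⦃a b⦄, r a b → r b a) : ∀ {n : ℕ} {a b : α},
    relWalkLen r n a b → relWalkLen r n b a
  | 0, _, _, (h : _ = _) => h.symm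
  | _ + 1, _, _, ⟨_, hac, hcb⟩ => relWalkLen_add (relWalkLen_symm hr hcb) (relWalkLen_one (hr hac))

lemma relWalkLen_map {s : β → β → Prop} {f : α → β} (hf : ∀ a b, r a b → s (f a) (f b)) :
    ∀ {n : ℕ} {a b : α}, relWalkLen r n a b → relWalkLen s n (f a) (f b)
  | 0, _, _, (h : _ = _) => congrArg f h
  | _ + 1, _, _, ⟨c, hac, hcb⟩ => ⟨f c, hf _ _ hac, relWalkLen_map hf hcb⟩

lemma exists_relWalkLen_of_reflTransGen {a b : α} (h : Relation.ReflTransGen r a b) :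
    ∃ n, relWalkLen r n a b := by
  induction h with
  | refl => exact ⟨0, rfl⟩
  | tail _ hbc ih =>
      obtain ⟨n, hn⟩ := ih
      exact ⟨n + 1, relWalkLen_add hn (relWalkLen_one hbc)⟩

end relWalkLen

namespace List.Forall₂

variable {α β : Type} {R : α → β → Prop} {l₁ : List α} {l₂ : List β}

lemma exists_of_mem_left (h : Forall₂ R l₁ l₂) {a : α} (ha : a ∈ l₁) : ∃ b ∈ l₂, R a b := by
  induction h with
  | nil => cases ha
  | cons hab _ ih =>
      rcases mem_cons.1 ha with rfl | ha
      · exact ⟨_, mem_cons_self, hab⟩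
      · obtain ⟨b, hb, hab⟩ := ih ha
        exact ⟨b, mem_cons_of_mem _ hb, hab⟩

lemma exists_of_mem_right (h : Forall₂ R l₁ l₂) {b : β} (hb : b ∈ l₂) : ∃ a ∈ l₁, R a b := by
  induction h with
  | nil => cases hb
  | cons hab _ ih =>
      rcases mem_cons.1 hb with rfl | hb
      · exact ⟨_, mem_cons_self, hab⟩
      · obtain ⟨a, ha, hab⟩ := ih hb
        exact ⟨a, mem_cons_of_mem _ ha, hab⟩

end List.Forall₂

namespace Multigraph

variable {G : Multigraph}

lemma walkLen_iff_relWalkLen : ∀ {n : ℕ} {x y : G.V}, G.WalkLen n x y ↔ relWalkLen G.Adj n x y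
  | 0, _, _ => Iff.rfl
  | _ + 1, _, _ => exists_congr fun _ => and_congr_right' walkLen_iff_relWalkLen

lemma dist_le_of_walkLen {n : ℕ} {x y : G.V} (h : G.WalkLen n x y) : G.dist x y ≤ n :=
  Nat.sInf_le h

lemma walkLen_dist (hconn : G.Connected) (x y : G.V) : G.WalkLen (G.dist x y) x y := by
  obtain ⟨n, hn⟩ := exists_relWalkLen_of_reflTransGen (hconn x y)
  exact Nat.sInf_mem (s := {n | G.WalkLen n x y}) ⟨n, walkLen_iff_relWalkLen.2 hn⟩

lemma tail_bar (e : G.E) : G.tail (G.bar e) = G.head e := by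
  rw [← G.head_bar, G.bar_bar]

lemma deg_eq_card {x : G.V} {s : Finset G.E} (hs : ∀ e, G.tail e = x ↔ e ∈ s) :
    G.deg x = s.card := by
  rw [deg]
  congr 1
  ext e
  simp [hs]

lemma exists_tail_eq {x : G.V} (hx : 0 < G.deg x) : ∃ e, G.tail e = x := by
  obtain ⟨e, he⟩ := Finset.card_pos.1 hx
  exact ⟨e, by simpa using he⟩

lemma exists_step {e : G.E} (he : 2 ≤ G.deg (G.head e)) : ∃ f, G.Step e f := by
  obtain ⟨f, hf, hne⟩ := Finset.exists_mem_ne he (G.bar e)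
  exact ⟨f, by simpa using hf, hne⟩

lemma step_bar_of_tail_eq {e f : G.E} (h : G.tail e = G.tail f) (hne : f ≠ e) :
    G.Step (G.bar e) f :=
  ⟨by rw [G.head_bar, h], by rwa [G.bar_bar]⟩

def SolgAdj (G : Multigraph) (e f : G.E) : Prop := G.Step e f ∨ G.Step f e

lemma solgAdj_symm {e f : G.E} (h : G.SolgAdj e f) : G.SolgAdj f e := h.symm

lemma adj_tail_of_solgAdj {e f : G.E} (h : G.SolgAdj e f) : G.Adj (G.tail e) (G.tail f) := by
  rcases h with h | h
  · exact ⟨e, rfl, h.1.symm⟩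
  · exact ⟨G.bar f, by rw [tail_bar, h.1], G.head_bar f⟩

lemma dist_tail_le_solgDist {e f : G.E} (h : ∃ n, relWalkLen G.SolgAdj n e f) :
    G.dist (G.tail e) (G.tail f) ≤ solgDist G e f :=
  dist_le_of_walkLen <| walkLen_iff_relWalkLen.2 <|
    relWalkLen_map (s := G.Adj) (fun _ _ => adj_tail_of_solgAdj) (Nat.sInf_mem h)

lemma solgDist_le {e f : G.E} {k : ℕ} (h : ∃ n ≤ k, relWalkLen G.SolgAdj n e f) :
    solgDist G e f ≤ k := by
  obtain ⟨n, hn, w⟩ := h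
  exact (Nat.sInf_le w).trans hn

def ReversibleWithin (G : Multigraph) (n : ℕ) (e : G.E) : Prop :=
  ∃ m ≤ n, relWalkLen G.SolgAdj m e (G.bar e)

namespace ReversibleWithin

variable {m n : ℕ} {e f : G.E}

lemma mono (h : G.ReversibleWithin m e) (hmn : m ≤ n) : G.ReversibleWithin n e :=
  let ⟨k, hk, w⟩ := h; ⟨k, hk.trans hmn, w⟩

lemma bar (h : G.ReversibleWithin n e) : G.ReversibleWithin n (G.bar e) := by
  obtain ⟨k, hk, w⟩ := h
  exact ⟨k, hk, by simpa only [G.bar_bar] using relWalkLen_symm (fun _ _ => solgAdj_symm) w⟩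

lemma of_tail_eq (h : G.ReversibleWithin n f) (hef : G.tail e = G.tail f) :
    G.ReversibleWithin (n + 2) e := by
  obtain rfl | hne := eq_or_ne e f
  · exact h.mono (Nat.le_add_right _ _)
  obtain ⟨k, hk, w⟩ := h
  have hin : G.SolgAdj e (G.bar f) := Or.inr (step_bar_of_tail_eq hef.symm hne)
  have hout : G.SolgAdj f (G.bar e) := Or.inr (step_bar_of_tail_eq hef hne.symm)
  exact ⟨1 + k + 1, by omega, relWalkLen_add (relWalkLen_add (relWalkLen_one hin)
    (relWalkLen_symm (fun _ _ => solgAdj_symm) w)) (relWalkLen_one hout)⟩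

lemma of_walkLen (hf : G.ReversibleWithin n f) :
    ∀ {d : ℕ} {e : G.E}, G.WalkLen d (G.tail e) (G.tail f) →
      G.ReversibleWithin (n + 2 * (d + 1)) e
  | 0, _, h => hf.of_tail_eq h
  | d + 1, e, ⟨_, ⟨g, hg, rfl⟩, hw⟩ => by
      have hbar : G.ReversibleWithin (n + 2 * (d + 1)) (G.bar g) :=
        of_walkLen hf (by rwa [tail_bar])
      have hg' : G.ReversibleWithin (n + 2 * (d + 1)) g := by
        simpa only [G.bar_bar] using hbar.bar
      exact hg'.of_tail_eq hg.symm

end ReversibleWithin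

lemma reversibleWithin_three_of_branch {b c h : G.E} (hbc : G.Step b c)
    (hh : G.tail h = G.tail c) (hhc : h ≠ c) (hhb : h ≠ G.bar b) :
    G.ReversibleWithin 3 c := by
  have h₁ : G.SolgAdj c b := Or.inr hbc
  have h₂ : G.SolgAdj b h := Or.inl ⟨hh.trans hbc.1, hhb⟩
  have h₃ : G.SolgAdj h (G.bar c) := Or.inr (step_bar_of_tail_eq hh.symm hhc)
  exact ⟨3, le_rfl, relWalkLen_add (relWalkLen_one h₁)
    (relWalkLen_add (relWalkLen_one h₂) (relWalkLen_one h₃))⟩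

namespace IsCycle

variable {l : List G.E}

lemma forall₂_step_rotate (hl : G.IsCycle l) : List.Forall₂ G.Step l (l.rotate 1) := by
  obtain ⟨hne, -, -, hch⟩ := hl
  obtain ⟨a, t, rfl⟩ := List.exists_cons_of_ne_nil hne
  have h := List.isChain_iff_forall₂.1 hch
  rw [List.take_one, List.head?_cons, Option.toList_some, List.cons_append,
    List.dropLast_cons_of_ne_nil (by simp), List.dropLast_concat, List.tail_cons] at h
  rwa [List.rotate_cons_succ, List.rotate_zero]

lemma exists_step_of_mem (hl : G.IsCycle l) {c : G.E} (hc : c ∈ l) : ∃ d ∈ l, G.Step c d := by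
  obtain ⟨d, hd, hcd⟩ := hl.forall₂_step_rotate.exists_of_mem_left hc
  exact ⟨d, List.mem_rotate.1 hd, hcd⟩

lemma exists_step_to_mem (hl : G.IsCycle l) {c : G.E} (hc : c ∈ l) : ∃ b ∈ l, G.Step b c :=
  hl.forall₂_step_rotate.exists_of_mem_right (List.mem_rotate.2 hc)

/-- Without a branch point, the tails of a cycle are closed under adjacency. -/
lemma isCycleGraph_of_forall_turn (hconn : G.Connected) (hl : G.IsCycle l)
    (hturn : ∀ c ∈ l, ∀ b, G.Step b c → ∀ h, G.tail h = G.tail c → h = c ∨ h = G.bar b) :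
    G.IsCycleGraph := by
  classical
  have htail : ∀ x, ∃ c ∈ l, G.tail c = x := by
    intro x
    obtain ⟨c₀, hc₀⟩ := List.exists_mem_of_ne_nil l hl.1
    induction hconn (G.tail c₀) x with
    | refl => exact ⟨c₀, hc₀, rfl⟩
    | tail _ hadj ih =>
        obtain ⟨c, hc, rfl⟩ := ih
        obtain ⟨g, hg, rfl⟩ := hadj
        obtain ⟨b, hb, hbc⟩ := hl.exists_step_to_mem hc
        rcases hturn c hc b hbc g hg with rfl | rfl
        · obtain ⟨d, hd, hgd⟩ := hl.exists_step_of_mem hc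
          exact ⟨d, hd, hgd.1⟩
        · exact ⟨b, hb, (G.head_bar b).symm⟩
  refine ⟨(l.finite_toSet.image G.tail).subset fun x _ => ?_, fun x => ?_⟩
  · obtain ⟨c, hc, rfl⟩ := htail x
    exact ⟨c, hc, rfl⟩
  · obtain ⟨c, hc, rfl⟩ := htail x
    obtain ⟨b, -, hbc⟩ := hl.exists_step_to_mem hc
    rw [deg_eq_card (s := {c, G.bar b}), Finset.card_pair hbc.2]
    intro g
    simp only [Finset.mem_insert, Finset.mem_singleton]
    refine ⟨hturn c hc b hbc g, ?_⟩
    rintro (rfl | rfl)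
    · rfl
    · rw [tail_bar, hbc.1]

lemma exists_reversibleWithin_three (hconn : G.Connected) (hnc : ¬ G.IsCycleGraph)
    (hl : G.IsCycle l) : ∃ c ∈ l, G.ReversibleWithin 3 c := by
  by_contra! hrev
  refine hnc (hl.isCycleGraph_of_forall_turn hconn fun c hc b hbc h hh => ?_)
  by_contra! hne
  exact hrev c hc (reversibleWithin_three_of_branch hbc hh hne.1 hne.2)

end IsCycle

lemma reversibleWithin_of_smallCyclesDense (hconn : G.Connected) (hnc : ¬ G.IsCycleGraph)
    {R : ℕ} (hR : ∀ x, ∃ l, G.IsCycle l ∧ ∀ e ∈ l, G.dist x (G.tail e) ≤ R) (e : G.E) :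
    G.ReversibleWithin (2 * R + 5) e := by
  obtain ⟨l, hl, hnear⟩ := hR (G.tail e)
  obtain ⟨c, hc, hrev⟩ := hl.exists_reversibleWithin_three hconn hnc
  have := hnear c hc
  exact (hrev.of_walkLen (walkLen_dist hconn _ _)).mono (by omega)

lemma exists_solgWalk_of_walkLen (hdeg : ∀ x, 2 ≤ G.deg x) :
    ∀ {d : ℕ} {e : G.E} {y : G.V}, G.WalkLen d (G.tail e) y →
      ∃ f, G.tail f = y ∧ relWalkLen G.SolgAdj d e f
  | 0, e, _, rfl => ⟨e, rfl, rfl⟩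
  | d + 1, e, _, ⟨_, ⟨g, hg, rfl⟩, hw⟩ => by
      obtain ⟨e', he', hee'⟩ : ∃ e', G.tail e' = G.head g ∧ G.SolgAdj e e' := by
        obtain rfl | hne := eq_or_ne g e
        · obtain ⟨e', he'⟩ := exists_step (hdeg (G.head g))
          exact ⟨e', he'.1, Or.inl he'⟩
        · exact ⟨G.bar g, tail_bar g, Or.inr (step_bar_of_tail_eq hg hne.symm)⟩
      obtain ⟨f, hf, w⟩ := exists_solgWalk_of_walkLen hdeg (by rwa [he'])
      exact ⟨f, hf, e', hee', w⟩

lemma exists_solgWalk_le (hconn : G.Connected) (hdeg : ∀ x, 2 ≤ G.deg x) {N : ℕ}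
    (hrev : ∀ e, G.ReversibleWithin N e) (e f : G.E) :
    ∃ n ≤ G.dist (G.tail e) (G.tail f) + (N + 1), relWalkLen G.SolgAdj n e f := by
  obtain ⟨f', hf', w⟩ := exists_solgWalk_of_walkLen hdeg (walkLen_dist hconn (G.tail e) (G.tail f))
  obtain rfl | hne := eq_or_ne f' f
  · exact ⟨_, by omega, w⟩
  obtain ⟨k, hk, w'⟩ := (hrev f).bar
  rw [G.bar_bar] at w'
  have hturn : G.SolgAdj f' (G.bar f) := Or.inr (step_bar_of_tail_eq hf'.symm hne)
  exact ⟨_ + (1 + k), by omega, relWalkLen_add w (relWalkLen_add (relWalkLen_one hturn) w')⟩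

end Multigraph

/-- A connected multigraph with `2 ≤ deg ≤ M`, not a cycle and with
dense small cycles, is roughly isometric to its symmetrized oriented line graph
via `φ(e) = e⁻`. -/
theorem solg_rough_isometry (G : Multigraph) (M : ℕ)
    (hconn : G.Connected) (hdeg : ∀ x, 2 ≤ G.deg x ∧ G.deg x ≤ M)
    (hnc : ¬ G.IsCycleGraph) (hcyc : G.SmallCyclesDense) :
    ∃ A B : ℝ, 1 ≤ A ∧ 0 ≤ B ∧
      (∀ e f : G.E,
        A⁻¹ * (solgDist G e f : ℝ) - A⁻¹ * B ≤ (G.dist (G.tail e) (G.tail f) : ℝ) ∧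
        (G.dist (G.tail e) (G.tail f) : ℝ) ≤ A * (solgDist G e f : ℝ) + B) ∧
      (∀ x : G.V, ∃ e : G.E, (G.dist x (G.tail e) : ℝ) ≤ B) := by
  obtain ⟨R, hR⟩ := hcyc
  have hdeg₂ : ∀ x, 2 ≤ G.deg x := fun x => (hdeg x).1
  have hwalk := Multigraph.exists_solgWalk_le hconn hdeg₂
    (Multigraph.reversibleWithin_of_smallCyclesDense hconn hnc hR)
  refine ⟨1, 2 * R + 6, le_rfl, by positivity, fun e f => ?_, fun x => ?_⟩
  · have hupper : (solgDist G e f : ℝ) ≤ G.dist (G.tail e) (G.tail f) + (2 * R + 5 + 1) := by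
      exact_mod_cast Multigraph.solgDist_le (hwalk e f)
    have hlower : (G.dist (G.tail e) (G.tail f) : ℝ) ≤ solgDist G e f := by
      exact_mod_cast Multigraph.dist_tail_le_solgDist ((hwalk e f).imp fun _ h => h.2)
    constructor <;> linarith
  · obtain ⟨e, he⟩ := Multigraph.exists_tail_eq (lt_of_lt_of_le two_pos (hdeg₂ x))
    have hx : G.dist x (G.tail e) ≤ 0 :=
      Multigraph.dist_le_of_walkLen (show G.WalkLen 0 x (G.tail e) from he.symm)
    exact ⟨e, by exact_mod_cast hx.trans (Nat.zero_le _)⟩
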